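/- Cauchy–Schwarz inequality for the reflection form: for all operators A, B in the subalgebra 𝒜₋ generated by {ψ(x), ψ(x)* : x ∈ Λ₋}, it holds that |tr(A ϑ(B))|² ≤ tr(A ϑ(A)) · tr(B ϑ(B)). -/

import Mathlib

open Matrix

noncomputable section

/-- The periodic lattice `Λ = ({-L+1, …, L})^ν` with coordinates mod `2L`. -/
abbrev Site (ν L : ℕ) := Fin ν → ZMod (2 * L)

variable {ν L N : ℕ}

/-- Canonical anticommutation relations for `ψ : Λ → M_N(ℂ)`. -/
def CAR (ψ : Site ν L → Matrix (Fin N) (Fin N) ℂ) : Prop :=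
  (∀ x y, ψ x * star (ψ y) + star (ψ y) * ψ x
      = if x = y then (1 : Matrix (Fin N) (Fin N) ℂ) else 0) ∧
  (∀ x y, ψ x * ψ y + ψ y * ψ x = 0)

/-- The left half `Λ₋ = {x ∈ Λ : -L+1 ≤ x⁽¹⁾ ≤ 0}` (in terms of representatives
mod `2L`, first coordinate `0` or in `{L+1,…,2L-1}`). -/
def LambdaMinus (ν L : ℕ) [NeZero ν] : Set (Site ν L) :=
  {x | (x 0).val = 0 ∨ L + 1 ≤ (x 0).val}

/-- The right half `Λ₊ = {x ∈ Λ : 1 ≤ x⁽¹⁾ ≤ L}`. -/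
def LambdaPlus (ν L : ℕ) [NeZero ν] : Set (Site ν L) :=
  {x | 1 ≤ (x 0).val ∧ (x 0).val ≤ L}

/-- The reflection `r(x) = (1 - x⁽¹⁾, x⁽²⁾, …, x⁽ᵛ⁾)` across the hyperplane
`x⁽¹⁾ = 1/2`. -/
def reflMap (ν L : ℕ) [NeZero ν] (x : Site ν L) : Site ν L :=
  fun i => if i = 0 then 1 - x 0 else x i

/-- The unital subalgebra `𝒜₋` generated by `{ψ(x), ψ(x)* : x ∈ Λ₋}`. -/
def algMinus (ν L N : ℕ) [NeZero ν]
    (ψ : Site ν L → Matrix (Fin N) (Fin N) ℂ) :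
    Subalgebra ℂ (Matrix (Fin N) (Fin N) ℂ) :=
  Algebra.adjoin ℂ {M | ∃ x ∈ LambdaMinus ν L, M = ψ x ∨ M = star (ψ x)}

/-- The unital subalgebra `𝒜₊` generated by `{ψ(x), ψ(x)* : x ∈ Λ₊}`. -/
def algPlus (ν L N : ℕ) [NeZero ν]
    (ψ : Site ν L → Matrix (Fin N) (Fin N) ℂ) :
    Subalgebra ℂ (Matrix (Fin N) (Fin N) ℂ) :=
  Algebra.adjoin ℂ {M | ∃ x ∈ LambdaPlus ν L, M = ψ x ∨ M = star (ψ x)}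

/-!
The trace factorizes across the two halves of the lattice, `N · tr (A C) = tr A · tr C` for
`A ∈ 𝒜₋` and `C ∈ 𝒜₊`, and `tr (ϑ B) = conj (tr B)`. Hence
`N · tr (A ϑ(B)) = tr A · conj (tr B)`, and the inequality is in fact an equality.

Both facts are proved on words in the Majorana operators `ψ x + ψ x*` and `i (ψ x - ψ x*)`,
which square to `1` and pairwise anticommute. A word in which every letter occurs an even number
of times reduces to `±1`. Otherwise, as there is an even number of Majorana operators, one of
them anticommutes with the word, so conjugating by it shows that the trace of the word vanishes.
-/

structure IsMajoranaFamily {ι R : Type*} [Ring R] (c : ι → R) : Prop where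
  mul_self : ∀ i, c i * c i = 1
  anticomm : ∀ i j, i ≠ j → c i * c j = -(c j * c i)

lemma List.exists_odd_length_add_count {ι : Type*} [Fintype ι] [DecidableEq ι]
    (hι : Even (Fintype.card ι)) {w : List ι} (hw : ∃ i, Odd (w.count i)) :
    ∃ j, Odd (w.length + w.count j) := by
  obtain ⟨i, hi⟩ := hw
  by_contra! h
  have hpar : ∀ j, Odd w.length ↔ Odd (w.count j) := fun j =>
    Nat.even_add'.mp (Nat.not_odd_iff_even.mp (h j))
  have hsum : ∑ j, w.count j = w.length := by
    simpa using Multiset.sum_count_eq_card (s := Finset.univ) (m := (w : Multiset ι)) (by simp)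
  have := (Finset.odd_sum_iff_odd_card_odd (s := Finset.univ) (w.count ·)).mp
    (hsum ▸ (hpar i).mpr hi)
  simp only [fun j => (hpar j).mp ((hpar i).mpr hi), Finset.filter_true, Finset.card_univ] at this
  exact Nat.not_even_iff_odd.mpr this hι

@[elab_as_elim]
lemma adjoin_image_induction {R A ι : Type*} [CommSemiring R] [Semiring A] [Algebra R A]
    {c : ι → A} {s : Set ι} {p : A → Prop}
    (prod : ∀ w : List ι, (∀ i ∈ w, i ∈ s) → p (w.map c).prod) (zero : p 0)
    (add : ∀ x y, p x → p y → p (x + y)) (smul : ∀ (r : R) x, p x → p (r • x))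
    {x : A} (hx : x ∈ Algebra.adjoin R (c '' s)) : p x := by
  rw [← Subalgebra.mem_toSubmodule, Algebra.adjoin_eq_span] at hx
  induction hx using Submodule.span_induction with
  | mem y hy =>
    suffices ∃ w : List ι, (∀ i ∈ w, i ∈ s) ∧ (w.map c).prod = y by
      obtain ⟨w, hw, rfl⟩ := this
      exact prod w hw
    induction hy using Submonoid.closure_induction with
    | mem y hy =>
      obtain ⟨i, hi, rfl⟩ := hy
      exact ⟨[i], by simpa, by simp⟩
    | one => exact ⟨[], by simp, by simp⟩
    | mul y z _ _ hy hz =>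
      obtain ⟨u, hu, rfl⟩ := hy
      obtain ⟨v, hv, rfl⟩ := hz
      exact ⟨u ++ v, fun i hi => (List.mem_append.mp hi).elim (hu i) (hv i), by simp⟩
  | zero => exact zero
  | add x y _ _ hx hy => exact add x y hx hy
  | smul r x _ hx => exact smul r x hx

namespace IsMajoranaFamily

section Ring

variable {ι R : Type*} [Ring R] {c : ι → R}

lemma map {S : Type*} [Ring S] (hc : IsMajoranaFamily c) (f : R →+* S) :
    IsMajoranaFamily (f ∘ c) where
  mul_self i := by simp [← map_mul, hc.mul_self]
  anticomm i j hij := by simp [← map_mul, hc.anticomm i j hij]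

variable [DecidableEq ι]

/-- `w.length + w.count j` has the parity of the number of letters of `w` other than `j`. -/
lemma mul_prod_map (hc : IsMajoranaFamily c) (j : ι) (w : List ι) :
    c j * (w.map c).prod = (-1 : ℤ) ^ (w.length + w.count j) • ((w.map c).prod * c j) := by
  induction w with
  | nil => simp
  | cons a w ih =>
    simp only [List.map_cons, List.prod_cons, List.length_cons, List.count_cons, beq_iff_eq]
    by_cases h : a = j
    · subst h
      rw [if_pos rfl, ← mul_assoc, hc.mul_self, one_mul, ih, smul_mul_assoc,
        mul_assoc, hc.mul_self, mul_one, smul_smul, ← pow_add,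
        Even.neg_one_pow ⟨w.length + w.count a + 1, by omega⟩, one_smul]
    · rw [if_neg h, ← mul_assoc, hc.anticomm j a (Ne.symm h), neg_mul, mul_assoc, ih,
        mul_smul_comm, ← mul_assoc, add_zero, add_right_comm, pow_succ, mul_neg_one, neg_smul]

lemma prod_map_eq_one_or_neg_one (hc : IsMajoranaFamily c) (w : List ι)
    (hw : ∀ i, Even (w.count i)) : (w.map c).prod = 1 ∨ (w.map c).prod = -1 := by
  induction hn : w.length using Nat.strong_induction_on generalizing w with
  | _ n ih =>
  obtain _ | ⟨j, t⟩ := w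
  · simp
  have hj : j ∈ t := List.count_pos_iff.mp <| by
    have := hw j
    simp only [List.count_cons_self, Nat.even_add_one] at this
    exact Nat.pos_of_ne_zero fun h => this (by simp [h])
  obtain ⟨t₁, t₂, rfl⟩ := List.append_of_mem hj
  have hprod : ((j :: (t₁ ++ j :: t₂)).map c).prod
      = (-1 : ℤ) ^ (t₁.length + t₁.count j) • ((t₁ ++ t₂).map c).prod := by
    simp only [List.map_cons, List.map_append, List.prod_cons, List.prod_append]
    rw [← mul_assoc, hc.mul_prod_map, smul_mul_assoc, mul_assoc, ← mul_assoc (c j),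
      hc.mul_self, one_mul]
  have hcount : ∀ i, Even ((t₁ ++ t₂).count i) := by
    intro i
    have := hw i
    simp only [List.count_cons, List.count_append, beq_iff_eq, Nat.even_iff] at this ⊢
    split_ifs at this <;> omega
  have hlen : (t₁ ++ t₂).length < n := by
    simp only [List.length_cons, List.length_append] at hn ⊢
    omega
  rw [hprod]
  rcases neg_one_pow_eq_or ℤ (t₁.length + t₁.count j) with h | h <;>
    rcases ih _ hlen (t₁ ++ t₂) hcount rfl with h' | h' <;>
    simp only [h, h', one_smul, neg_smul, neg_neg, true_or, or_true]

end Ring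

section Matrix

variable {ι n S : Type*} [Fintype ι] [DecidableEq ι] [Fintype n] [DecidableEq n] [CommRing S]
  {c : ι → Matrix n n S}

lemma trace_prod_map_eq_zero [IsAddTorsionFree S] (hc : IsMajoranaFamily c)
    (hι : Even (Fintype.card ι)) {w : List ι} (hw : ∃ i, Odd (w.count i)) :
    ((w.map c).prod).trace = 0 := by
  obtain ⟨j, hj⟩ := List.exists_odd_length_add_count hι hw
  set P := (w.map c).prod
  have hanti : c j * P = -(P * c j) := by rw [hc.mul_prod_map, hj.neg_one_pow, neg_one_zsmul]
  refine self_eq_neg.mp ?_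
  calc P.trace = (c j * (P * c j)).trace := by
        rw [Matrix.trace_mul_comm, mul_assoc, hc.mul_self, mul_one]
    _ = -P.trace := by
        rw [← mul_assoc, hanti, neg_mul, Matrix.trace_neg, mul_assoc, hc.mul_self, mul_one]

lemma card_mul_trace_prod_mul_prod [IsAddTorsionFree S] (hc : IsMajoranaFamily c)
    (hι : Even (Fintype.card ι)) {a b : List ι} (hab : ∀ i ∈ a, i ∉ b) :
    (Fintype.card n : S) * ((a.map c).prod * (b.map c).prod).trace
      = ((a.map c).prod).trace * ((b.map c).prod).trace := by
  by_cases ha : ∀ i, Even (a.count i)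
  · by_cases hb : ∀ i, Even (b.count i)
    · rcases hc.prod_map_eq_one_or_neg_one a ha with h | h <;>
        rcases hc.prod_map_eq_one_or_neg_one b hb with h' | h' <;> simp [h, h']
    · obtain ⟨i, hi⟩ : ∃ i, Odd (b.count i) := by simpa using hb
      have hia : a.count i = 0 :=
        List.count_eq_zero.mpr fun h => hab i h (List.count_pos_iff.mp hi.pos)
      rw [← List.prod_append, ← List.map_append,
        hc.trace_prod_map_eq_zero hι ⟨i, by simpa [List.count_append, hia]⟩,
        hc.trace_prod_map_eq_zero hι ⟨i, hi⟩, mul_zero, mul_zero]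
  · obtain ⟨i, hi⟩ : ∃ i, Odd (a.count i) := by simpa using ha
    have hib : b.count i = 0 := List.count_eq_zero.mpr (hab i (List.count_pos_iff.mp hi.pos))
    rw [← List.prod_append, ← List.map_append,
      hc.trace_prod_map_eq_zero hι ⟨i, by simpa [List.count_append, hib]⟩,
      hc.trace_prod_map_eq_zero hι ⟨i, hi⟩, mul_zero, zero_mul]

lemma card_mul_trace_mul [IsAddTorsionFree S] (hc : IsMajoranaFamily c)
    (hι : Even (Fintype.card ι)) {s t : Set ι} (hst : Disjoint s t) {A C : Matrix n n S}
    (hA : A ∈ Algebra.adjoin S (c '' s)) (hC : C ∈ Algebra.adjoin S (c '' t)) :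
    (Fintype.card n : S) * (A * C).trace = A.trace * C.trace := by
  refine adjoin_image_induction (fun a ha => ?_) ?_ (fun x y hx hy => ?_)
    (fun r x hx => ?_) hA
  · refine adjoin_image_induction (fun b hb => ?_) ?_ (fun x y hx hy => ?_)
      (fun r x hx => ?_) hC
    · exact hc.card_mul_trace_prod_mul_prod hι fun i hia hib =>
        hst.ne_of_mem (ha i hia) (hb i hib) rfl
    · simp
    · rw [mul_add, trace_add, trace_add]
      linear_combination hx + hy
    · rw [mul_smul_comm, trace_smul, trace_smul, smul_eq_mul, smul_eq_mul]
      linear_combination r * hx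
  · simp
  · rw [add_mul, trace_add, trace_add]
    linear_combination hx + hy
  · rw [smul_mul_assoc, trace_smul, trace_smul, smul_eq_mul, smul_eq_mul]
    linear_combination r * hx

lemma trace_map_eq_star_trace [StarRing S] [IsAddTorsionFree S] (hc : IsMajoranaFamily c)
    (hι : Even (Fintype.card ι)) (θ : Matrix n n S →+* Matrix n n S)
    (hθ : ∀ (a : S) X, θ (a • X) = star a • θ X) {s : Set ι} {B : Matrix n n S}
    (hB : B ∈ Algebra.adjoin S (c '' s)) : (θ B).trace = star B.trace := by
  refine adjoin_image_induction (fun w _ => ?_) ?_ (fun x y hx hy => ?_)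
    (fun a x hx => ?_) hB
  · by_cases hw : ∀ i, Even (w.count i)
    · rcases hc.prod_map_eq_one_or_neg_one w hw with h | h <;> simp [h]
    · obtain ⟨i, hi⟩ : ∃ i, Odd (w.count i) := by simpa using hw
      rw [map_list_prod, List.map_map, (hc.map θ).trace_prod_map_eq_zero hι ⟨i, hi⟩,
        hc.trace_prod_map_eq_zero hι ⟨i, hi⟩, star_zero]
  · simp
  · simp [hx, hy]
  · rw [hθ, trace_smul, trace_smul, hx, smul_eq_mul, smul_eq_mul, star_mul']

end Matrix

end IsMajoranaFamily

namespace CAR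

variable {ψ : Site ν L → Matrix (Fin N) (Fin N) ℂ}

lemma mul_self (h : CAR ψ) (x : Site ν L) : ψ x * ψ x = 0 := by
  have h2 := h.2 x x
  rw [← two_smul ℂ] at h2
  exact (smul_eq_zero.mp h2).resolve_left two_ne_zero

lemma star_mul_self (h : CAR ψ) (x : Site ν L) : star (ψ x) * star (ψ x) = 0 := by
  rw [← star_mul, h.mul_self, star_zero]

lemma mul_star_add_star_mul (h : CAR ψ) (x : Site ν L) :
    ψ x * star (ψ x) + star (ψ x) * ψ x = 1 := by
  simpa using h.1 x x

lemma map_one (h : CAR ψ) {ϑ : Matrix (Fin N) (Fin N) ℂ → Matrix (Fin N) (Fin N) ℂ}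
    (hadd : ∀ A B, ϑ (A + B) = ϑ A + ϑ B) (hmul : ∀ A B, ϑ (A * B) = ϑ A * ϑ B)
    {r : Site ν L → Site ν L} (hψ : ∀ x, ϑ (ψ x) = ψ (r x))
    (hψstar : ∀ x, ϑ (star (ψ x)) = star (ψ (r x))) : ϑ 1 = 1 := by
  conv_lhs => rw [← h.mul_star_add_star_mul 0]
  rw [hadd, hmul, hmul, hψ, hψstar, h.mul_star_add_star_mul]

end CAR

def majorana (ψ : Site ν L → Matrix (Fin N) (Fin N) ℂ) :
    Site ν L × Bool → Matrix (Fin N) (Fin N) ℂ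
  | (x, false) => ψ x + star (ψ x)
  | (x, true) => Complex.I • (ψ x - star (ψ x))

section Majorana

variable {ψ : Site ν L → Matrix (Fin N) (Fin N) ℂ}

lemma isMajoranaFamily_majorana (h : CAR ψ) : IsMajoranaFamily (majorana ψ) where
  mul_self := by
    rintro ⟨x, _ | _⟩ <;> rw [← h.mul_star_add_star_mul x] <;>
      simp only [majorana, add_mul, mul_add, sub_mul, mul_sub, smul_mul_assoc, mul_smul_comm,
        h.mul_self, h.star_mul_self] <;> match_scalars <;> simp
  anticomm := by
    rintro ⟨x, b⟩ ⟨y, b'⟩ hne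
    by_cases hxy : x = y
    · subst hxy
      obtain ⟨rfl, rfl⟩ | ⟨rfl, rfl⟩ : b = false ∧ b' = true ∨ b = true ∧ b' = false := by
        cases b <;> cases b' <;> simp_all
      all_goals simp only [majorana, add_mul, mul_add, sub_mul, mul_sub, smul_mul_assoc,
        mul_smul_comm, h.mul_self, h.star_mul_self]; module
    · have h1 : ψ x * ψ y = -(ψ y * ψ x) := eq_neg_of_add_eq_zero_left (h.2 x y)
      have h2 : ψ x * star (ψ y) = -(star (ψ y) * ψ x) :=
        eq_neg_of_add_eq_zero_left (by simpa [hxy] using h.1 x y)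
      have h3 : star (ψ x) * ψ y = -(ψ y * star (ψ x)) :=
        eq_neg_of_add_eq_zero_right (by simpa [Ne.symm hxy] using h.1 y x)
      have h4 : star (ψ x) * star (ψ y) = -(star (ψ y) * star (ψ x)) := by
        have := congrArg star (h.2 y x)
        simp only [star_add, star_mul, star_zero] at this
        exact eq_neg_of_add_eq_zero_left this
      cases b <;> cases b' <;>
        simp only [majorana, add_mul, mul_add, sub_mul, mul_sub, smul_mul_assoc, mul_smul_comm,
          h1, h2, h3, h4] <;> module

lemma adjoin_le_adjoin_majorana (S : Set (Site ν L)) :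
    Algebra.adjoin ℂ {M | ∃ x ∈ S, M = ψ x ∨ M = star (ψ x)}
      ≤ Algebra.adjoin ℂ (majorana ψ '' (S ×ˢ Set.univ)) := by
  refine Algebra.adjoin_le ?_
  rintro M ⟨x, hx, hM⟩
  have hv : majorana ψ (x, false) ∈ Algebra.adjoin ℂ (majorana ψ '' (S ×ˢ Set.univ)) :=
    Algebra.subset_adjoin ⟨_, ⟨hx, trivial⟩, rfl⟩
  have hw : majorana ψ (x, true) ∈ Algebra.adjoin ℂ (majorana ψ '' (S ×ˢ Set.univ)) :=
    Algebra.subset_adjoin ⟨_, ⟨hx, trivial⟩, rfl⟩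
  rcases hM with rfl | rfl
  · have : ψ x = (1 / 2 : ℂ) • (majorana ψ (x, false) - Complex.I • majorana ψ (x, true)) := by
      simp only [majorana, smul_sub, smul_smul, Complex.I_mul_I]
      module
    rw [this]
    exact Subalgebra.smul_mem _ (sub_mem hv (Subalgebra.smul_mem _ hw _)) _
  · have : star (ψ x)
        = (1 / 2 : ℂ) • (majorana ψ (x, false) + Complex.I • majorana ψ (x, true)) := by
      simp only [majorana, smul_sub, smul_smul, Complex.I_mul_I]
      module
    rw [this]
    exact Subalgebra.smul_mem _ (add_mem hv (Subalgebra.smul_mem _ hw _)) _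

end Majorana

lemma disjoint_lambdaMinus_lambdaPlus [NeZero ν] : Disjoint (LambdaMinus ν L) (LambdaPlus ν L) :=
  Set.disjoint_left.mpr fun x hx hx' => by
    simp only [LambdaMinus, LambdaPlus, Set.mem_ofPred_eq] at hx hx'
    omega

lemma reflMap_mem_lambdaPlus [NeZero ν] (hL : 1 ≤ L) {x : Site ν L} (hx : x ∈ LambdaMinus ν L) :
    reflMap ν L x ∈ LambdaPlus ν L := by
  have : NeZero (2 * L) := ⟨by omega⟩
  have hv := ZMod.val_lt (x 0)
  have hcast : reflMap ν L x 0 = ((2 * L + 1 - (x 0).val : ℕ) : ZMod (2 * L)) := by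
    rw [Nat.cast_sub (by omega), Nat.cast_add, ZMod.natCast_self, ZMod.natCast_zmod_val, zero_add,
      Nat.cast_one]
    exact if_pos rfl
  simp only [LambdaMinus, LambdaPlus, Set.mem_ofPred_eq, hcast, ZMod.val_natCast] at hx ⊢
  rcases hx with h | h
  · rw [h, Nat.sub_zero, Nat.add_mod_left, Nat.mod_eq_of_lt (by omega)]
    omega
  · rw [Nat.mod_eq_of_lt (by omega)]
    omega

section Reflection

variable {ψ : Site ν L → Matrix (Fin N) (Fin N) ℂ} [NeZero ν]
  (θ : Matrix (Fin N) (Fin N) ℂ →+* Matrix (Fin N) (Fin N) ℂ)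
  (hθ : ∀ (a : ℂ) X, θ (a • X) = star a • θ X)
  (hψ : ∀ x, θ (ψ x) = ψ (reflMap ν L x))
  (hψstar : ∀ x, θ (star (ψ x)) = star (ψ (reflMap ν L x)))
include hθ hψ hψstar

lemma map_mem_algPlus (hL : 1 ≤ L) {A : Matrix (Fin N) (Fin N) ℂ} (hA : A ∈ algMinus ν L N ψ) :
    θ A ∈ algPlus ν L N ψ := by
  induction hA using Algebra.adjoin_induction with
  | mem M hM =>
    obtain ⟨x, hx, rfl | rfl⟩ := hM
    · rw [hψ]
      exact Algebra.subset_adjoin ⟨_, reflMap_mem_lambdaPlus hL hx, Or.inl rfl⟩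
    · rw [hψstar]
      exact Algebra.subset_adjoin ⟨_, reflMap_mem_lambdaPlus hL hx, Or.inr rfl⟩
  | algebraMap a =>
    rw [Algebra.algebraMap_eq_smul_one, hθ, map_one]
    exact Subalgebra.smul_mem _ (one_mem _) _
  | add _ _ _ _ hu hv => rw [map_add]; exact add_mem hu hv
  | mul _ _ _ _ hu hv => rw [map_mul]; exact mul_mem hu hv

lemma natCast_mul_trace_mul_map (hL : 1 ≤ L) (hCAR : CAR ψ) {A B : Matrix (Fin N) (Fin N) ℂ}
    (hA : A ∈ algMinus ν L N ψ) (hB : B ∈ algMinus ν L N ψ) :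
    (N : ℂ) * (A * θ B).trace = A.trace * star B.trace := by
  have : NeZero (2 * L) := ⟨by omega⟩
  have hc := isMajoranaFamily_majorana hCAR
  have hι : Even (Fintype.card (Site ν L × Bool)) := by simp [Fintype.card_prod]
  have hst : Disjoint (LambdaMinus ν L ×ˢ Set.univ) (LambdaPlus ν L ×ˢ (Set.univ : Set Bool)) :=
    Set.disjoint_prod.mpr (Or.inl disjoint_lambdaMinus_lambdaPlus)
  have := hc.card_mul_trace_mul hι hst (adjoin_le_adjoin_majorana _ hA)
    (adjoin_le_adjoin_majorana _ (map_mem_algPlus θ hθ hψ hψstar hL hB))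
  rw [Fintype.card_fin] at this
  rw [this, hc.trace_map_eq_star_trace hι θ hθ (adjoin_le_adjoin_majorana _ hB)]

end Reflection

lemma norm_sq_le_re_mul_re_of_natCast_mul_eq {n : ℕ} (hn : 1 ≤ n) {a b t p q : ℂ}
    (ht : n * t = a * star b) (hp : n * p = a * star a) (hq : n * q = b * star b) :
    ‖t‖ ^ 2 ≤ p.re * q.re := by
  have hre : ∀ {z w : ℂ}, n * w = z * star z → (n : ℝ) * w.re = ‖z‖ ^ 2 := fun h => by
    simpa [Complex.mul_conj, Complex.normSq_eq_norm_sq, ← Complex.ofReal_pow] using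
      congrArg Complex.re h
  have hnorm : (n : ℝ) * ‖t‖ = ‖a‖ * ‖b‖ := by simpa using congrArg norm ht
  have hn0 : (n : ℝ) ^ 2 ≠ 0 := pow_ne_zero 2 (by positivity)
  refine le_of_eq (mul_left_cancel₀ hn0 ?_)
  linear_combination (n * ‖t‖ + ‖a‖ * ‖b‖) * hnorm - ‖b‖ ^ 2 * hre hp - n * p.re * hre hq

theorem reflection_cauchy_schwarz_general (ν L N : ℕ) [NeZero ν]
    (hL : 1 ≤ L) (hN : 1 ≤ N)
    (ψ : Site ν L → Matrix (Fin N) (Fin N) ℂ) (hCAR : CAR ψ)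
    (ϑ : Matrix (Fin N) (Fin N) ℂ → Matrix (Fin N) (Fin N) ℂ)
    (hadd : ∀ A B, ϑ (A + B) = ϑ A + ϑ B)
    (hsmul : ∀ (c : ℂ) (A), ϑ (c • A) = (starRingEnd ℂ c) • ϑ A)
    (hmul : ∀ A B, ϑ (A * B) = ϑ A * ϑ B)
    (hψ : ∀ x, ϑ (ψ x) = ψ (reflMap ν L x))
    (hψstar : ∀ x, ϑ (star (ψ x)) = star (ψ (reflMap ν L x))) :
    ∀ A ∈ algMinus ν L N ψ, ∀ B ∈ algMinus ν L N ψ,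
      ‖(A * ϑ B).trace‖ ^ 2 ≤
        (A * ϑ A).trace.re * (B * ϑ B).trace.re := by
  let θ : Matrix (Fin N) (Fin N) ℂ →+* Matrix (Fin N) (Fin N) ℂ :=
    RingHom.mk' ⟨⟨ϑ, hCAR.map_one hadd hmul hψ hψstar⟩, hmul⟩ hadd
  have key : ∀ A ∈ algMinus ν L N ψ, ∀ B ∈ algMinus ν L N ψ,
      (N : ℂ) * (A * ϑ B).trace = A.trace * star B.trace := fun A hA B hB =>
    natCast_mul_trace_mul_map θ hsmul hψ hψstar hL hCAR hA hB
  intro A hA B hB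
  exact norm_sq_le_re_mul_re_of_natCast_mul_eq hN (key A hA B hB) (key A hA A hA) (key B hB B hB)

/-- **Cauchy–Schwarz inequality for the reflection form**: for the antilinear
reflection `ϑ : 𝒜₋ → 𝒜₊` and all `A, B` in the subalgebra `𝒜₋` generated by
`{ψ(x), ψ(x)* : x ∈ Λ₋}`, one has `|tr(A ϑ(B))|² ≤ tr(A ϑ(A)) · tr(B ϑ(B))`. -/
theorem reflection_cauchy_schwarz (ν L N : ℕ) [NeZero ν]
    (hν : 2 ≤ ν) (hL : 1 ≤ L) (hN : 1 ≤ N)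
    (ψ : Site ν L → Matrix (Fin N) (Fin N) ℂ) (hCAR : CAR ψ)
    (ϑ : Matrix (Fin N) (Fin N) ℂ → Matrix (Fin N) (Fin N) ℂ)
    (hadd : ∀ A B, ϑ (A + B) = ϑ A + ϑ B)
    (hsmul : ∀ (c : ℂ) (A), ϑ (c • A) = (starRingEnd ℂ c) • ϑ A)
    (hmul : ∀ A B, ϑ (A * B) = ϑ A * ϑ B)
    (hstar : ∀ A, ϑ (star A) = star (ϑ A))
    (hψ : ∀ x, ϑ (ψ x) = ψ (reflMap ν L x))
    (hψstar : ∀ x, ϑ (star (ψ x)) = star (ψ (reflMap ν L x))) :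
    ∀ A ∈ algMinus ν L N ψ, ∀ B ∈ algMinus ν L N ψ,
      ‖(A * ϑ B).trace‖ ^ 2 ≤
        (A * ϑ A).trace.re * (B * ϑ B).trace.re :=
  reflection_cauchy_schwarz_general ν L N hL hN ψ hCAR ϑ hadd hsmul hmul hψ hψstar

end
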